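/- Let a be a positive integer with a ∈ {1, 2, 4}. If there exist integers h, p, q, t, r satisfying the four equations 6h − a²p = 2a; 14a²h − 3a⁴p + a⁵q = 0; 5ah − 6a³p − a⁴q + a⁵t = 0; and h − 6a³q + a⁵r = 0, then a = 1. -/

import Mathlib

/-!
Eliminating `h` and `p` from the first three equations leaves `35 a² q = 4 a³ t - 138`.
For even `a` the left side is divisible by `4` while the right side is `2` modulo `4`.
-/

theorem thirtyFive_mul_sq_mul_eq {a h p q t : ℤ} (ha : a ≠ 0)
    (e₁ : 6 * h - a ^ 2 * p = 2 * a)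
    (e₂ : 14 * a ^ 2 * h - 3 * a ^ 4 * p + a ^ 5 * q = 0)
    (e₃ : 5 * a * h - 6 * a ^ 3 * p - a ^ 4 * q + a ^ 5 * t = 0) :
    35 * a ^ 2 * q = 4 * a ^ 3 * t - 138 := by
  have h₂ : 4 * h = 6 * a + a ^ 3 * q :=
    mul_left_cancel₀ (pow_ne_zero 2 ha) (by linear_combination -e₂ + 3 * a ^ 2 * e₁)
  have h₃ : 31 * h = 12 * a - a ^ 3 * q + a ^ 4 * t :=
    mul_left_cancel₀ ha (by linear_combination -e₃ + 6 * a * e₁)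
  exact mul_left_cancel₀ ha (by linear_combination 4 * h₃ - 31 * h₂)

theorem not_even_of_intersection_equations {a h p q t : ℤ} (ha : a ≠ 0)
    (e₁ : 6 * h - a ^ 2 * p = 2 * a)
    (e₂ : 14 * a ^ 2 * h - 3 * a ^ 4 * p + a ^ 5 * q = 0)
    (e₃ : 5 * a * h - 6 * a ^ 3 * p - a ^ 4 * q + a ^ 5 * t = 0) :
    ¬ Even a := by
  rintro ⟨k, rfl⟩
  have h_rel := thirtyFive_mul_sq_mul_eq ha e₁ e₂ e₃
  have h_dvd : (4 : ℤ) ∣ 138 := ⟨8 * k ^ 3 * t - 35 * k ^ 2 * q, by linear_combination h_rel⟩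
  norm_num at h_dvd

theorem stmt_8_general (a : ℤ) (hmem : a = 1 ∨ a = 2 ∨ a = 4)
    (hex : ∃ h p q t r : ℤ,
      6 * h - a ^ 2 * p = 2 * a ∧
      14 * a ^ 2 * h - 3 * a ^ 4 * p + a ^ 5 * q = 0 ∧
      5 * a * h - 6 * a ^ 3 * p - a ^ 4 * q + a ^ 5 * t = 0 ∧
      h - 6 * a ^ 3 * q + a ^ 5 * r = 0) :
    a = 1 := by
  obtain ⟨h, p, q, t, -, e₁, e₂, e₃, -⟩ := hex
  rcases hmem with rfl | rfl | rfl
  · rfl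
  · exact absurd ⟨1, rfl⟩ (not_even_of_intersection_equations two_ne_zero e₁ e₂ e₃)
  · exact absurd ⟨2, rfl⟩ (not_even_of_intersection_equations four_ne_zero e₁ e₂ e₃)

/-- Numerical core of Proposition 7.3: among `a ∈ {1, 2, 4}`, only `a = 1` admits
integer solutions to the four equations. -/
theorem stmt_8 (a : ℤ) (ha : 0 < a) (hmem : a = 1 ∨ a = 2 ∨ a = 4)
    (hex : ∃ h p q t r : ℤ,
      6 * h - a ^ 2 * p = 2 * a ∧
      14 * a ^ 2 * h - 3 * a ^ 4 * p + a ^ 5 * q = 0 ∧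
      5 * a * h - 6 * a ^ 3 * p - a ^ 4 * q + a ^ 5 * t = 0 ∧
      h - 6 * a ^ 3 * q + a ^ 5 * r = 0) :
    a = 1 :=
  stmt_8_general a hmem hex
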